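/- Under the same representation-learning assumptions (T^v a representation of X^v and T^l a representation of X^l), the joint mutual information admits the bound I(X^v, X^l; T^v, T^l) ≤ (3/2)[I(X^v; T^v) + I(X^l; T^l)]. -/

import Mathlib

open scoped BigOperators

/-- A probability distribution on a finite sample space. -/
structure FinProb (Ω : Type) [Fintype Ω] where
  p : Ω → ℝ
  nonneg : ∀ ω, 0 ≤ p ω
  sum_one : ∑ ω, p ω = 1

/-- Probability that a discrete random variable `X` takes the value `a`. -/
noncomputable def probOf {Ω α : Type} [Fintype Ω] [Fintype α] [DecidableEq α]
    (μ : FinProb Ω) (X : Ω → α) (a : α) : ℝ :=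
  ∑ ω, if X ω = a then μ.p ω else 0

/-- Shannon entropy of a discrete random variable. -/
noncomputable def entropy {Ω α : Type} [Fintype Ω] [Fintype α] [DecidableEq α]
    (μ : FinProb Ω) (X : Ω → α) : ℝ :=
  ∑ a, Real.negMulLog (probOf μ X a)

/-- Conditional Shannon entropy `H(X|Y) = H(X,Y) - H(Y)`. -/
noncomputable def condEntropy {Ω α β : Type} [Fintype Ω] [Fintype α] [DecidableEq α]
    [Fintype β] [DecidableEq β] (μ : FinProb Ω) (X : Ω → α) (Y : Ω → β) : ℝ :=
  entropy μ (fun ω => (X ω, Y ω)) - entropy μ Y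

/-- Mutual information `I(X;Z) = H(X) + H(Z) - H(X,Z)`. -/
noncomputable def mutualInfo {Ω α β : Type} [Fintype Ω] [Fintype α] [DecidableEq α]
    [Fintype β] [DecidableEq β] (μ : FinProb Ω) (X : Ω → α) (Z : Ω → β) : ℝ :=
  entropy μ X + entropy μ Z - entropy μ (fun ω => (X ω, Z ω))

/-- Conditional mutual information `I(X;Z|Y) = H(X|Y) + H(Z|Y) - H(X,Z|Y)`. -/
noncomputable def condMutualInfo {Ω α β γ : Type} [Fintype Ω] [Fintype α] [DecidableEq α]
    [Fintype β] [DecidableEq β] [Fintype γ] [DecidableEq γ]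
    (μ : FinProb Ω) (X : Ω → α) (Z : Ω → β) (Y : Ω → γ) : ℝ :=
  condEntropy μ X Y + condEntropy μ Z Y - condEntropy μ (fun ω => (X ω, Z ω)) Y

/-- Conditional probability `p(t|x)` of `T = t` given `X = x`. -/
noncomputable def condProb {Ω α β : Type} [Fintype Ω] [Fintype α] [DecidableEq α]
    [Fintype β] [DecidableEq β] (μ : FinProb Ω) (T : Ω → β) (X : Ω → α) (t : β) (x : α) : ℝ :=
  probOf μ (fun ω => (T ω, X ω)) (t, x) / probOf μ X x

/-- Expected KL divergence `KL(p(t|x₁) ‖ q(t|x₂))` between two channels sharing a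
representation space, averaged over the joint law of `(X₁, X₂)`. -/
noncomputable def klChannels {Ω α₁ α₂ γ : Type} [Fintype Ω] [Fintype α₁] [DecidableEq α₁]
    [Fintype α₂] [DecidableEq α₂] [Fintype γ] [DecidableEq γ] (μ : FinProb Ω)
    (T₁ : Ω → γ) (X₁ : Ω → α₁) (T₂ : Ω → γ) (X₂ : Ω → α₂) : ℝ :=
  ∑ x : α₁ × α₂, probOf μ (fun ω => (X₁ ω, X₂ ω)) x *
    ∑ t : γ, condProb μ T₁ X₁ t x.1 *
      Real.log (condProb μ T₁ X₁ t x.1 / condProb μ T₂ X₂ t x.2)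

/-!
Write `X = (Xᵛ, Xˡ)` and `T = (Tᵛ, Tˡ)`. By the chain rule `H(T | X) = H(Tᵛ | X) + H(Tˡ | Tᵛ, X)`;
the second Markov condition turns the last term into `H(Tˡ | Xˡ)`, while conditioning on `Tˡ`
as well and the first Markov condition give `H(Tᵛ | X) ≥ H(Tᵛ | Tˡ, X) = H(Tᵛ | Xᵛ)`. Together with
`H(T) ≤ H(Tᵛ) + H(Tˡ)` this yields `I(X; T) ≤ I(Xᵛ; Tᵛ) + I(Xˡ; Tˡ)`, which implies the bound
since mutual information is nonnegative. Every inequality used is strong subadditivity of entropy.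
-/

variable {Ω α β γ δ : Type} [Fintype Ω] [Fintype α] [DecidableEq α]
  [Fintype β] [DecidableEq β] [Fintype γ] [DecidableEq γ] [Fintype δ] [DecidableEq δ]

noncomputable def probAt (μ : FinProb Ω) (X : Ω → α) (ω : Ω) : ℝ :=
  probOf μ X (X ω)

lemma probOf_nonneg (μ : FinProb Ω) (X : Ω → α) (a : α) : 0 ≤ probOf μ X a :=
  Finset.sum_nonneg fun ω _ => by split <;> simp [μ.nonneg ω]

lemma sum_probOf_mul (μ : FinProb Ω) (X : Ω → α) (g : α → ℝ) :
    ∑ a, probOf μ X a * g a = ∑ ω, μ.p ω * g (X ω) := by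
  simp only [probOf, Finset.sum_mul, ite_mul, zero_mul]
  rw [Finset.sum_comm]
  simp only [Finset.sum_ite_eq, Finset.mem_univ, if_true]

lemma sum_probOf (μ : FinProb Ω) (X : Ω → α) : ∑ a, probOf μ X a = 1 := by
  simpa [μ.sum_one] using sum_probOf_mul μ X fun _ => 1

lemma sum_probOf_pair (μ : FinProb Ω) (X : Ω → α) (Y : Ω → β) (y : β) :
    ∑ x, probOf μ (fun ω => (X ω, Y ω)) (x, y) = probOf μ Y y := by
  simp only [probOf]
  rw [Finset.sum_comm]
  simp [Prod.ext_iff, ite_and, Finset.sum_ite_eq]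

lemma p_le_probAt (μ : FinProb Ω) (X : Ω → α) (ω : Ω) : μ.p ω ≤ probAt μ X ω := by
  unfold probAt probOf
  simpa using Finset.single_le_sum (f := fun ω' => if X ω' = X ω then μ.p ω' else 0)
    (fun ω' _ => by split <;> simp [μ.nonneg ω']) (Finset.mem_univ ω)

lemma entropy_eq_neg_sum (μ : FinProb Ω) (X : Ω → α) :
    entropy μ X = -∑ ω, μ.p ω * Real.log (probAt μ X ω) := by
  unfold probAt
  rw [← sum_probOf_mul μ X fun a => Real.log (probOf μ X a), entropy,
    ← Finset.sum_neg_distrib]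
  simp only [Real.negMulLog, neg_mul]

lemma sum_mul_div_probAt_le (μ : FinProb Ω) (X : Ω → α) (g : α → ℝ) (hg : ∀ a, 0 ≤ g a) :
    ∑ ω, μ.p ω * (g (X ω) / probAt μ X ω) ≤ ∑ a, g a := by
  unfold probAt
  rw [← sum_probOf_mul μ X fun a => g a / probOf μ X a]
  gcongr with a
  rcases eq_or_ne (probOf μ X a) 0 with h | h
  · simp [h, hg a]
  · rw [mul_div_cancel₀ _ h]

lemma probAt_congr (μ : FinProb Ω) {X : Ω → α} {Y : Ω → β}
    (h : ∀ ω ω', X ω = X ω' ↔ Y ω = Y ω') (ω : Ω) : probAt μ X ω = probAt μ Y ω := by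
  unfold probAt probOf
  exact Finset.sum_congr rfl fun ω' _ => by simp only [h ω' ω]

lemma entropy_congr (μ : FinProb Ω) {X : Ω → α} {Y : Ω → β}
    (h : ∀ ω ω', X ω = X ω' ↔ Y ω = Y ω') : entropy μ X = entropy μ Y := by
  simp only [entropy_eq_neg_sum, probAt_congr μ h]

lemma entropy_const (μ : FinProb Ω) (a : α) : entropy μ (fun _ => a) = 0 := by
  have h : ∀ ω, probAt μ (fun _ => a) ω = 1 := fun ω => by simp [probAt, probOf, μ.sum_one]
  simp [entropy_eq_neg_sum, h]

lemma condEntropy_congr_right (μ : FinProb Ω) (X : Ω → α) {Y : Ω → β} {Y' : Ω → δ}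
    (h : ∀ ω ω', Y ω = Y ω' ↔ Y' ω = Y' ω') : condEntropy μ X Y = condEntropy μ X Y' := by
  have hXY : entropy μ (fun ω => (X ω, Y ω)) = entropy μ (fun ω => (X ω, Y' ω)) :=
    entropy_congr μ fun ω ω' => by simp only [Prod.mk.injEq, h ω ω']
  rw [condEntropy, condEntropy, hXY, entropy_congr μ h]

lemma sum_p_mul_ratio_le_one (μ : FinProb Ω) (X : Ω → α) (Z : Ω → δ) (Y : Ω → β) :
    ∑ ω, μ.p ω * (probAt μ (fun ω => (X ω, Y ω)) ω * probAt μ (fun ω => (Z ω, Y ω)) ω /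
      (probAt μ (fun ω => ((X ω, Z ω), Y ω)) ω * probAt μ Y ω)) ≤ 1 := by
  set g : (α × δ) × β → ℝ := fun w => probOf μ (fun ω => (X ω, Y ω)) (w.1.1, w.2) *
    probOf μ (fun ω => (Z ω, Y ω)) (w.1.2, w.2) / probOf μ Y w.2
  have hg : ∀ w, 0 ≤ g w := fun w =>
    div_nonneg (mul_nonneg (probOf_nonneg ..) (probOf_nonneg ..)) (probOf_nonneg ..)
  calc _ = ∑ ω, μ.p ω * (g ((X ω, Z ω), Y ω) / probAt μ (fun ω => ((X ω, Z ω), Y ω)) ω) := by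
          simp only [g, probAt, div_mul_eq_div_div_swap]
    _ ≤ ∑ w, g w := sum_mul_div_probAt_le μ _ g hg
    _ = ∑ y, (∑ x, probOf μ (fun ω => (X ω, Y ω)) (x, y)) *
          (∑ z, probOf μ (fun ω => (Z ω, Y ω)) (z, y)) / probOf μ Y y := by
          rw [Fintype.sum_prod_type_right]
          simp only [g, Fintype.sum_prod_type, Finset.sum_mul_sum, Finset.sum_div]
    _ = 1 := by simp only [sum_probOf_pair, mul_self_div_self, sum_probOf]

/-- Strong subadditivity: apply `log t ≤ t - 1` pointwise to the ratio of
`sum_p_mul_ratio_le_one`. -/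
theorem entropy_triple_add_entropy_le (μ : FinProb Ω) (X : Ω → α) (Z : Ω → δ) (Y : Ω → β) :
    entropy μ (fun ω => ((X ω, Z ω), Y ω)) + entropy μ Y ≤
      entropy μ (fun ω => (X ω, Y ω)) + entropy μ (fun ω => (Z ω, Y ω)) := by
  have hsum := sum_p_mul_ratio_le_one μ X Z Y
  simp only [entropy_eq_neg_sum]
  set a := probAt μ (fun ω => (X ω, Y ω))
  set b := probAt μ (fun ω => (Z ω, Y ω))
  set c := probAt μ (fun ω => ((X ω, Z ω), Y ω))
  set d := probAt μ Y
  have hterm : ∀ ω, μ.p ω * (Real.log (a ω) + Real.log (b ω) - Real.log (c ω) - Real.log (d ω))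
      ≤ μ.p ω * (a ω * b ω / (c ω * d ω)) - μ.p ω := by
    intro ω
    rcases (μ.nonneg ω).eq_or_lt with h0 | hp
    · simp [← h0]
    have ha : 0 < a ω := hp.trans_le (p_le_probAt μ _ ω)
    have hb : 0 < b ω := hp.trans_le (p_le_probAt μ _ ω)
    have hc : 0 < c ω := hp.trans_le (p_le_probAt μ _ ω)
    have hd : 0 < d ω := hp.trans_le (p_le_probAt μ _ ω)
    have hlog : Real.log (a ω * b ω / (c ω * d ω)) ≤ a ω * b ω / (c ω * d ω) - 1 :=
      Real.log_le_sub_one_of_pos (by positivity)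
    rw [Real.log_div (by positivity) (by positivity), Real.log_mul ha.ne' hb.ne',
      Real.log_mul hc.ne' hd.ne'] at hlog
    nlinarith
  have := Finset.sum_le_sum fun ω (_ : ω ∈ Finset.univ) => hterm ω
  simp only [mul_add, mul_sub, Finset.sum_add_distrib, Finset.sum_sub_distrib, μ.sum_one] at this
  linarith

lemma condEntropy_pair_right_le (μ : FinProb Ω) (X : Ω → α) (Z : Ω → δ) (Y : Ω → β) :
    condEntropy μ X (fun ω => (Z ω, Y ω)) ≤ condEntropy μ X Y := by
  have hassoc : entropy μ (fun ω => (X ω, (Z ω, Y ω))) = entropy μ (fun ω => ((X ω, Z ω), Y ω)) :=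
    entropy_congr μ fun _ _ => by simp only [Prod.mk.injEq, and_assoc]
  rw [condEntropy, condEntropy, hassoc]
  linarith [entropy_triple_add_entropy_le μ X Z Y]

lemma entropy_pair_le (μ : FinProb Ω) (X : Ω → α) (Z : Ω → δ) :
    entropy μ (fun ω => (X ω, Z ω)) ≤ entropy μ X + entropy μ Z := by
  have h := condEntropy_pair_right_le μ X Z fun _ => ()
  rw [condEntropy_congr_right μ X (Y' := Z) fun _ _ => by simp, condEntropy, condEntropy,
    entropy_const, entropy_congr μ (X := fun ω => (X ω, ())) (Y := X) fun _ _ => by simp] at h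
  linarith

lemma mutualInfo_nonneg (μ : FinProb Ω) (X : Ω → α) (Z : Ω → δ) : 0 ≤ mutualInfo μ X Z := by
  rw [mutualInfo]
  linarith [entropy_pair_le μ X Z]

lemma mutualInfo_eq_entropy_sub_condEntropy (μ : FinProb Ω) (X : Ω → α) (Z : Ω → δ) :
    mutualInfo μ X Z = entropy μ Z - condEntropy μ Z X := by
  rw [mutualInfo, condEntropy, entropy_congr μ (X := fun ω => (X ω, Z ω)) (Y := fun ω => (Z ω, X ω))
    fun _ _ => by simp only [Prod.mk.injEq, and_comm]]
  ring

lemma condEntropy_pair_left (μ : FinProb Ω) (X : Ω → α) (Z : Ω → δ) (Y : Ω → β) :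
    condEntropy μ (fun ω => (X ω, Z ω)) Y =
      condEntropy μ X Y + condEntropy μ Z (fun ω => (X ω, Y ω)) := by
  rw [condEntropy, condEntropy, condEntropy,
    entropy_congr μ (X := fun ω => ((X ω, Z ω), Y ω)) (Y := fun ω => (Z ω, (X ω, Y ω)))
      fun _ _ => by simp only [Prod.mk.injEq]; tauto]
  ring

lemma condMutualInfo_eq_condEntropy_sub (μ : FinProb Ω) (X : Ω → α) (Z : Ω → δ) (Y : Ω → β) :
    condMutualInfo μ X Z Y = condEntropy μ X Y - condEntropy μ X (fun ω => (Z ω, Y ω)) := by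
  rw [condMutualInfo, condEntropy, condEntropy, condEntropy, condEntropy,
    entropy_congr μ (X := fun ω => ((X ω, Z ω), Y ω)) (Y := fun ω => (X ω, (Z ω, Y ω)))
      fun _ _ => by simp only [Prod.mk.injEq, and_assoc]]
  ring

theorem mutualInfo_pair_le_add_of_markov (μ : FinProb Ω) (Xv : Ω → α) (Xl : Ω → β)
    (Tv : Ω → γ) (Tl : Ω → δ)
    (hMv : condMutualInfo μ Tv (fun ω => (Xl ω, Tl ω)) Xv = 0)
    (hMl : condMutualInfo μ Tl (fun ω => (Xv ω, Tv ω)) Xl = 0) :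
    mutualInfo μ (fun ω => (Xv ω, Xl ω)) (fun ω => (Tv ω, Tl ω)) ≤
      mutualInfo μ Xv Tv + mutualInfo μ Xl Tl := by
  have hv : condEntropy μ Tv (fun ω => (Tl ω, (Xv ω, Xl ω))) = condEntropy μ Tv Xv := by
    rw [condMutualInfo_eq_condEntropy_sub] at hMv
    rw [condEntropy_congr_right μ Tv (Y' := fun ω => ((Xl ω, Tl ω), Xv ω))
      fun _ _ => by simp only [Prod.mk.injEq]; tauto]
    linarith
  have hl : condEntropy μ Tl (fun ω => (Tv ω, (Xv ω, Xl ω))) = condEntropy μ Tl Xl := by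
    rw [condMutualInfo_eq_condEntropy_sub] at hMl
    rw [condEntropy_congr_right μ Tl (Y' := fun ω => ((Xv ω, Tv ω), Xl ω))
      fun _ _ => by simp only [Prod.mk.injEq]; tauto]
    linarith
  calc mutualInfo μ (fun ω => (Xv ω, Xl ω)) (fun ω => (Tv ω, Tl ω))
      = entropy μ (fun ω => (Tv ω, Tl ω)) - condEntropy μ Tv (fun ω => (Xv ω, Xl ω))
          - condEntropy μ Tl (fun ω => (Tv ω, (Xv ω, Xl ω))) := by
        rw [mutualInfo_eq_entropy_sub_condEntropy, condEntropy_pair_left]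
        ring
    _ ≤ entropy μ Tv + entropy μ Tl - condEntropy μ Tv (fun ω => (Tl ω, (Xv ω, Xl ω)))
          - condEntropy μ Tl (fun ω => (Tv ω, (Xv ω, Xl ω))) := by
        linarith [entropy_pair_le μ Tv Tl, condEntropy_pair_right_le μ Tv Tl fun ω => (Xv ω, Xl ω)]
    _ = mutualInfo μ Xv Tv + mutualInfo μ Xl Tl := by
        rw [hv, hl, mutualInfo_eq_entropy_sub_condEntropy, mutualInfo_eq_entropy_sub_condEntropy]
        ring

/-- Alternative upper bound: under the representation-learning Markov assumptions,
`I(Xᵛ,Xˡ;Tᵛ,Tˡ) ≤ (3/2)[I(Xᵛ;Tᵛ) + I(Xˡ;Tˡ)]`. -/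
theorem jointMI_le_three_halves {Ω αv αl γ : Type} [Fintype Ω]
    [Fintype αv] [DecidableEq αv] [Fintype αl] [DecidableEq αl] [Fintype γ] [DecidableEq γ]
    (μ : FinProb Ω) (Xv : Ω → αv) (Xl : Ω → αl) (Tv Tl : Ω → γ)
    (hMv : condMutualInfo μ Tv (fun ω => (Xl ω, Tl ω)) Xv = 0)
    (hMl : condMutualInfo μ Tl (fun ω => (Xv ω, Tv ω)) Xl = 0) :
    mutualInfo μ (fun ω => (Xv ω, Xl ω)) (fun ω => (Tv ω, Tl ω)) ≤
      (3 / 2) * (mutualInfo μ Xv Tv + mutualInfo μ Xl Tl) := by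
  linarith [mutualInfo_pair_le_add_of_markov μ Xv Xl Tv Tl hMv hMl,
    mutualInfo_nonneg μ Xv Tv, mutualInfo_nonneg μ Xl Tl]
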